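/- Let Φ(t, θ, r) = (t(sin(θ+r) − sin θ)/r, t(−cos(θ+r) + cos θ)/r, t²(r − sin r)/(2r²)). Then for all t > 0, θ ∈ ℝ, and r ∈ (−2π, 2π) with r ≠ 0, the absolute value of the Jacobian determinant of Φ at (t, θ, r) equals t³ (2 − 2cos r − r sin r)/r⁴. -/

import Mathlib

open Real

noncomputable section

abbrev R3 := ℝ × ℝ × ℝ

/-- The coordinate map `Φ(t, θ, r)` on the Heisenberg group. -/
noncomputable def Phi (q : R3) : R3 :=
  (q.1 * (Real.sin (q.2.1 + q.2.2) - Real.sin q.2.1) / q.2.2,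
   q.1 * (-Real.cos (q.2.1 + q.2.2) + Real.cos q.2.1) / q.2.2,
   q.1 ^ 2 * (q.2.2 - Real.sin q.2.2) / (2 * q.2.2 ^ 2))

/-!
Adding `t / r` times the `∂t` column of the Jacobian matrix to its `∂r` column turns the latter
into `(t cos (θ + r) / r, t sin (θ + r) / r, t² (1 - cos r) / (2 r²))`; expanding along the third
row, `θ` drops out through `sin r = sin ((θ + r) - θ)` and `|e^{i(θ+r)} - e^{iθ}|² = 2 - 2 cos r`,
leaving `t³ ((1 - cos r)² - (r - sin r) sin r) / r⁴ = t³ (2 - 2 cos r - r sin r) / r⁴`.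
This is nonnegative for `|r| ≤ 2π`, since
`2 - 2 cos r - r sin r = 4 sin (r/2) (sin (r/2) - (r/2) cos (r/2))` and `x cos x ≤ sin x` on `[0, π]`.
-/

def finThreeArrowEquivProd (R : Type*) [CommRing R] : (Fin 3 → R) ≃ₗ[R] R × R × R where
  toFun f := (f 0, f 1, f 2)
  invFun x := ![x.1, x.2.1, x.2.2]
  map_add' _ _ := rfl
  map_smul' _ _ := rfl
  left_inv f := by funext i; fin_cases i <;> rfl
  right_inv _ := rfl

theorem LinearMap.det_prod_prod_eq_det_fin_three {R : Type*} [CommRing R]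
    (f : R × R × R →ₗ[R] R × R × R) :
    f.det = Matrix.det !![(f (1, 0, 0)).1, (f (0, 1, 0)).1, (f (0, 0, 1)).1;
                          (f (1, 0, 0)).2.1, (f (0, 1, 0)).2.1, (f (0, 0, 1)).2.1;
                          (f (1, 0, 0)).2.2, (f (0, 1, 0)).2.2, (f (0, 0, 1)).2.2] := by
  rw [← LinearMap.det_conj f (finThreeArrowEquivProd R).symm, ← LinearMap.det_toMatrix']
  congr 1
  ext i j
  fin_cases i <;> fin_cases j <;> rfl

theorem fderiv_apply_eq_of_hasDerivAt_comp {𝕜 E F : Type*} [NontriviallyNormedField 𝕜]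
    [NormedAddCommGroup E] [NormedSpace 𝕜 E] [NormedAddCommGroup F] [NormedSpace 𝕜 F]
    {f : E → F} {γ : 𝕜 → E} {s : 𝕜} {v : E} {w : F} (hf : DifferentiableAt 𝕜 f (γ s))
    (hγ : HasDerivAt γ v s) (h : HasDerivAt (fun x => f (γ x)) w s) :
    fderiv 𝕜 f (γ s) v = w :=
  (hf.hasFDerivAt.comp_hasDerivAt s hγ).unique h

namespace Real

theorem mul_cos_le_sin {x : ℝ} (h0 : 0 ≤ x) (hπ : x ≤ π) : x * cos x ≤ sin x := by
  rcases lt_or_ge x (π / 2) with hx | hx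
  · have hcos : 0 < cos x := cos_pos_of_mem_Ioo ⟨by linarith [pi_pos], hx⟩
    rw [← le_div_iff₀ hcos, ← tan_eq_sin_div_cos]
    exact le_tan h0 hx
  · have hcos : cos x ≤ 0 := cos_nonpos_of_pi_div_two_le_of_le hx (by linarith)
    nlinarith [sin_nonneg_of_nonneg_of_le_pi h0 hπ]

theorem sin_mul_sin_sub_mul_cos_nonneg {x : ℝ} (h1 : -π ≤ x) (h2 : x ≤ π) :
    0 ≤ sin x * (sin x - x * cos x) := by
  rcases le_total 0 x with hx | hx
  · exact mul_nonneg (sin_nonneg_of_nonneg_of_le_pi hx h2) (sub_nonneg.2 (mul_cos_le_sin hx h2))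
  · have h := mul_nonneg (sin_nonneg_of_nonneg_of_le_pi (neg_nonneg.2 hx) (by linarith))
      (sub_nonneg.2 (mul_cos_le_sin (neg_nonneg.2 hx) (by linarith)))
    rw [sin_neg, cos_neg] at h
    linarith

theorem two_sub_two_mul_cos_sub_mul_sin_nonneg {r : ℝ} (h1 : -(2 * π) ≤ r) (h2 : r ≤ 2 * π) :
    0 ≤ 2 - 2 * cos r - r * sin r := by
  have half_angle : 2 - 2 * cos r - r * sin r
      = 4 * (sin (r / 2) * (sin (r / 2) - r / 2 * cos (r / 2))) := by
    conv_lhs => rw [← mul_div_cancel₀ r two_ne_zero, cos_two_mul, sin_two_mul]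
    linear_combination (-4) * sin_sq_add_cos_sq (r / 2)
  rw [half_angle]
  exact mul_nonneg zero_le_four (sin_mul_sin_sub_mul_cos_nonneg (by linarith) (by linarith))

theorem sin_add_sub_sin_sq_add_cos_sub_cos_add_sq (θ r : ℝ) :
    (sin (θ + r) - sin θ) ^ 2 + (-cos (θ + r) + cos θ) ^ 2 = 2 - 2 * cos r := by
  rw [sin_add, cos_add]
  linear_combination (1 + sin r ^ 2 + cos r ^ 2 - 2 * cos r) * sin_sq_add_cos_sq θ
    + sin_sq_add_cos_sq r

end Real

lemma differentiableAt_Phi {q : R3} (hr : q.2.2 ≠ 0) : DifferentiableAt ℝ Phi q := by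
  unfold Phi
  fun_prop (disch := positivity)

section Jacobian

variable {t θ r : ℝ}

lemma hasDerivAt_Phi_fst :
    HasDerivAt (fun s => Phi (s, θ, r))
      ((sin (θ + r) - sin θ) / r, (-cos (θ + r) + cos θ) / r, t * (r - sin r) / r ^ 2) t := by
  simp only [Phi]
  refine (((hasDerivAt_id' t).mul_const _).div_const _).prodMk
    ((((hasDerivAt_id' t).mul_const _).div_const _).prodMk
      (((hasDerivAt_pow 2 t).mul_const _).div_const _)) |>.congr_deriv ?_
  simp only [Prod.mk.injEq]
  refine ⟨?_, ?_, ?_⟩ <;> ring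

lemma hasDerivAt_Phi_snd :
    HasDerivAt (fun s => Phi (t, s, r))
      (t * (cos (θ + r) - cos θ) / r, t * (sin (θ + r) - sin θ) / r, 0) θ := by
  have hsin := ((hasDerivAt_id' θ).add_const r).sin.sub (hasDerivAt_sin θ)
  have hcos := ((hasDerivAt_id' θ).add_const r).cos.neg.add (hasDerivAt_cos θ)
  simp only [Phi]
  refine ((hsin.const_mul t).div_const r).prodMk
    (((hcos.const_mul t).div_const r).prodMk (hasDerivAt_const θ _)) |>.congr_deriv ?_
  simp only [Prod.mk.injEq, and_true]
  constructor <;> ring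

lemma hasDerivAt_Phi_thd (hr : r ≠ 0) :
    HasDerivAt (fun s => Phi (t, θ, s))
      (t * cos (θ + r) / r - t * (sin (θ + r) - sin θ) / r ^ 2,
       t * sin (θ + r) / r - t * (-cos (θ + r) + cos θ) / r ^ 2,
       t ^ 2 * (1 - cos r) / (2 * r ^ 2) - t ^ 2 * (r - sin r) / r ^ 3) r := by
  have hsin := (((hasDerivAt_id' r).const_add θ).sin.sub_const (sin θ)).const_mul t
  have hcos := (((hasDerivAt_id' r).const_add θ).cos.neg.add_const (cos θ)).const_mul t
  have h3 := ((hasDerivAt_id' r).sub (hasDerivAt_sin r)).const_mul (t ^ 2)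
  have h2r : 2 * r ^ 2 ≠ 0 := by positivity
  simp only [Phi]
  refine (hsin.div (hasDerivAt_id' r) hr).prodMk ((hcos.div (hasDerivAt_id' r) hr).prodMk
    (h3.div ((hasDerivAt_pow 2 r).const_mul 2) h2r)) |>.congr_deriv ?_
  simp only [Prod.mk.injEq, Pi.neg_apply, Pi.sub_apply]
  refine ⟨by field_simp, by field_simp, ?_⟩
  field_simp
  ring

lemma det_fderiv_Phi (hr : r ≠ 0) :
    (fderiv ℝ Phi (t, θ, r)).det = t ^ 3 * (2 - 2 * cos r - r * sin r) / r ^ 4 := by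
  have hΦ := differentiableAt_Phi (q := (t, θ, r)) hr
  have col_fst := fderiv_apply_eq_of_hasDerivAt_comp hΦ
    ((hasDerivAt_id' t).prodMk ((hasDerivAt_const t θ).prodMk (hasDerivAt_const t r)))
    hasDerivAt_Phi_fst
  have col_snd := fderiv_apply_eq_of_hasDerivAt_comp hΦ
    ((hasDerivAt_const θ t).prodMk ((hasDerivAt_id' θ).prodMk (hasDerivAt_const θ r)))
    hasDerivAt_Phi_snd
  have col_thd := fderiv_apply_eq_of_hasDerivAt_comp hΦ
    ((hasDerivAt_const r t).prodMk ((hasDerivAt_const r θ).prodMk (hasDerivAt_id' r)))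
    (hasDerivAt_Phi_thd hr)
  rw [ContinuousLinearMap.det, LinearMap.det_prod_prod_eq_det_fin_three]
  simp only [ContinuousLinearMap.coe_coe, col_fst, col_snd, col_thd, Matrix.det_fin_three,
    Matrix.of_apply, Matrix.cons_val', Matrix.cons_val_zero, Matrix.cons_val_fin_one,
    Matrix.cons_val_one, Matrix.cons_val, mul_zero, sub_zero, add_zero]
  have sin_sub_eq : (-cos (θ + r) + cos θ) * sin (θ + r) + (sin (θ + r) - sin θ) * cos (θ + r)
      = sin r := by
    rw [show r = (θ + r) - θ by ring, sin_sub]; ring_nf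
  linear_combination (-(r - sin r) * t ^ 3 / r ^ 4) * sin_sub_eq
    + ((1 - cos r) / 2 * t ^ 3 / r ^ 4) * sin_add_sub_sin_sq_add_cos_sub_cos_add_sq θ r
    + (t ^ 3 / r ^ 4) * sin_sq_add_cos_sq r

end Jacobian

theorem stmt16 (t θ r : ℝ) (ht : 0 < t) (hr : r ∈ Set.Ioo (-(2 * π)) (2 * π)) (hr0 : r ≠ 0) :
    |(fderiv ℝ Phi (t, θ, r)).det| =
      t ^ 3 * (2 - 2 * Real.cos r - r * Real.sin r) / r ^ 4 := by
  rw [det_fderiv_Phi hr0, abs_of_nonneg]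
  exact div_nonneg (mul_nonneg (by positivity)
    (two_sub_two_mul_cos_sub_mul_sin_nonneg hr.1.le hr.2.le)) (by positivity)
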